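/- arXiv:2311.00944 — 2 statements merged into one kernel-verified Lean document; each statement's English description precedes it below -/
import Mathlib

section
/- Let p = 2l and assume f satisfies the μ-PL condition in y. Then for all x, z ∈ ℝ^{d1} and y ∈ ℝ^{d2}: ‖x*(y,z) − x*(z)‖² ≤ (2/(lμ))‖∇_y f(x,y)‖² + (2/(lμ))‖∇_x f̂(x,y,z)‖². -/
open Set Metric
open scoped RealInnerProductSpace

noncomputable def gradx {d1 d2 : ℕ}
    (f : EuclideanSpace ℝ (Fin d1) → EuclideanSpace ℝ (Fin d2) → ℝ)
    (x : EuclideanSpace ℝ (Fin d1)) (y : EuclideanSpace ℝ (Fin d2)) :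
    EuclideanSpace ℝ (Fin d1) :=
  gradient (fun x' => f x' y) x

noncomputable def grady {d1 d2 : ℕ}
    (f : EuclideanSpace ℝ (Fin d1) → EuclideanSpace ℝ (Fin d2) → ℝ)
    (x : EuclideanSpace ℝ (Fin d1)) (y : EuclideanSpace ℝ (Fin d2)) :
    EuclideanSpace ℝ (Fin d2) :=
  gradient (fun y' => f x y') y

/-- `f` is differentiable and `l`-smooth: the gradient is `l`-Lipschitz with respect to the
Euclidean norm on the product space (stated in squared form). -/
def IsLSmooth {d1 d2 : ℕ} (l : ℝ)
    (f : EuclideanSpace ℝ (Fin d1) → EuclideanSpace ℝ (Fin d2) → ℝ) : Prop :=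
  Differentiable ℝ (fun w : EuclideanSpace ℝ (Fin d1) × EuclideanSpace ℝ (Fin d2) => f w.1 w.2) ∧
  ∀ x₁ x₂ y₁ y₂,
    ‖gradx f x₁ y₁ - gradx f x₂ y₂‖ ^ 2 + ‖grady f x₁ y₁ - grady f x₂ y₂‖ ^ 2
      ≤ l ^ 2 * (‖x₁ - x₂‖ ^ 2 + ‖y₁ - y₂‖ ^ 2)

/-- `f̂(x, y, z) = f(x, y) + (p/2)‖x − z‖²`. -/
noncomputable def fhat {d1 d2 : ℕ}
    (f : EuclideanSpace ℝ (Fin d1) → EuclideanSpace ℝ (Fin d2) → ℝ) (p : ℝ)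
    (x : EuclideanSpace ℝ (Fin d1)) (y : EuclideanSpace ℝ (Fin d2))
    (z : EuclideanSpace ℝ (Fin d1)) : ℝ :=
  f x y + p / 2 * ‖x - z‖ ^ 2

/-!
Write `a = x*(y,z)` and `b = x*(z)`. With `p = 2l` the gradient of `u ↦ f̂(u,y,z)` is
`l`-strongly monotone, so this function grows at least like `(l/2)‖u − a‖²` away from its
minimizer `a`, and `l‖x − a‖ ≤ ‖∇ₓf̂(x,y,z)‖`. Since `b` minimizes `Φ(·,z) ≥ f̂(·,y,z)`,
`(l/2)‖a − b‖² ≤ f̂(b,y,z) − f̂(a,y,z) ≤ Φ(a,z) − f̂(a,y,z) = max f(a,·) − f(a,y)`, which the PL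
inequality bounds by `‖∇_y f(a,y)‖²/(2μ)`. Finally `‖∇_y f(a,y)‖ ≤ ‖∇_y f(x,y)‖ + l‖a − x‖`
by smoothness, and `(s + t)² ≤ 2s² + 2t²`.
-/

section QuadraticGrowth

variable {E : Type*} [NormedAddCommGroup E] [InnerProductSpace ℝ E]

theorem mul_norm_le_norm_of_mul_norm_sq_le_inner {u v : E} {m : ℝ}
    (h : m * ‖u‖ ^ 2 ≤ ⟪v, u⟫) : m * ‖u‖ ≤ ‖v‖ := by
  rcases (norm_nonneg u).eq_or_lt with hu | hu
  · rw [← hu, mul_zero]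
    exact norm_nonneg v
  · refine le_of_mul_le_mul_right ?_ hu
    calc m * ‖u‖ * ‖u‖ = m * ‖u‖ ^ 2 := by ring
      _ ≤ ⟪v, u⟫ := h
      _ ≤ ‖v‖ * ‖u‖ := real_inner_le_norm v u

theorem sub_mul_norm_sq_le_inner_of_lipschitz {F : E → E} {l : ℝ}
    (hF : ∀ u v, ‖F u - F v‖ ≤ l * ‖u - v‖) (p : ℝ) (z u v : E) :
    (p - l) * ‖u - v‖ ^ 2 ≤ ⟪(F u + p • (u - z)) - (F v + p • (v - z)), u - v⟫ := by
  have hsplit : (F u + p • (u - z)) - (F v + p • (v - z)) = (F u - F v) + p • (u - v) := by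
    module
  rw [hsplit, inner_add_left, real_inner_smul_left, real_inner_self_eq_norm_sq]
  have hcs : -(‖F u - F v‖ * ‖u - v‖) ≤ ⟪F u - F v, u - v⟫ :=
    neg_le_of_abs_le (abs_real_inner_le_norm _ _)
  have hlip : ‖F u - F v‖ * ‖u - v‖ ≤ l * ‖u - v‖ * ‖u - v‖ :=
    mul_le_mul_of_nonneg_right (hF u v) (norm_nonneg _)
  nlinarith

variable [CompleteSpace E]

theorem IsLocalMin.hasGradientAt_eq_zero {g : E → ℝ} {a g' : E} (h : IsLocalMin g a)
    (hg : HasGradientAt g g' a) : g' = 0 :=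
  (InnerProductSpace.toDual ℝ E).map_eq_zero_iff.1 (h.hasFDerivAt_eq_zero hg.hasFDerivAt)

theorem add_half_mul_norm_sq_le_of_inner_gradient {g : E → ℝ} {G : E → E} {a : E} {m : ℝ}
    (hg : ∀ u, HasGradientAt g (G u) u) (hG : ∀ u, m * ‖u - a‖ ^ 2 ≤ ⟪G u, u - a⟫) (b : E) :
    g a + m / 2 * ‖b - a‖ ^ 2 ≤ g b := by
  set c : ℝ → E := fun t => a + t • (b - a)
  set φ : ℝ → ℝ := fun t => g (c t) - m / 2 * t ^ 2 * ‖b - a‖ ^ 2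
  have hc : ∀ t, HasDerivAt c (b - a) t := fun t => by
    have h := ((hasDerivAt_id t).smul_const (b - a)).const_add a
    rwa [one_smul] at h
  have hφ : ∀ t, HasDerivAt φ (⟪G (c t), b - a⟫ - m * t * ‖b - a‖ ^ 2) t := fun t => by
    have hgc : HasDerivAt (fun s => g (c s)) ⟪G (c t), b - a⟫ t := by
      have h := (hg (c t)).hasFDerivAt.comp_hasDerivAt t (hc t)
      rwa [InnerProductSpace.toDual_apply_apply] at h
    have hq : HasDerivAt (fun s : ℝ => m / 2 * s ^ 2 * ‖b - a‖ ^ 2) (m * t * ‖b - a‖ ^ 2) t :=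
      (((hasDerivAt_pow 2 t).const_mul (m / 2)).mul_const _).congr_deriv (by ring)
    exact hgc.sub hq
  have hmono : MonotoneOn φ (Ici 0) := by
    refine monotoneOn_of_hasDerivWithinAt_nonneg (convex_Ici 0)
      (fun t _ => (hφ t).continuousAt.continuousWithinAt)
      (fun t _ => (hφ t).hasDerivWithinAt) fun t ht => ?_
    rw [interior_Ici, mem_Ioi] at ht
    have hct : c t - a = t • (b - a) := by simp [c]
    have h := hG (c t)
    rw [hct, real_inner_smul_right, norm_smul, Real.norm_of_nonneg ht.le] at h
    nlinarith
  have h01 := hmono (mem_Ici.2 le_rfl) (mem_Ici.2 zero_le_one) zero_le_one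
  simp only [φ, c, zero_smul, one_smul, add_zero, add_sub_cancel] at h01
  linarith

end QuadraticGrowth

namespace IsLSmooth

variable {d1 d2 : ℕ} {l : ℝ} {f : EuclideanSpace ℝ (Fin d1) → EuclideanSpace ℝ (Fin d2) → ℝ}

theorem norm_gradx_sub_le (hf : IsLSmooth l f) (hl : 0 ≤ l) (u v : EuclideanSpace ℝ (Fin d1))
    (y : EuclideanSpace ℝ (Fin d2)) : ‖gradx f u y - gradx f v y‖ ≤ l * ‖u - v‖ := by
  have h := hf.2 u v y y
  rw [sub_self, norm_zero, zero_pow two_ne_zero, add_zero] at h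
  refine (pow_le_pow_iff_left₀ (norm_nonneg _) (by positivity) two_ne_zero).1 ?_
  nlinarith [sq_nonneg ‖grady f u y - grady f v y‖]

theorem norm_grady_sub_le (hf : IsLSmooth l f) (hl : 0 ≤ l) (u v : EuclideanSpace ℝ (Fin d1))
    (y : EuclideanSpace ℝ (Fin d2)) : ‖grady f u y - grady f v y‖ ≤ l * ‖u - v‖ := by
  have h := hf.2 u v y y
  rw [sub_self, norm_zero, zero_pow two_ne_zero, add_zero] at h
  refine (pow_le_pow_iff_left₀ (norm_nonneg _) (by positivity) two_ne_zero).1 ?_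
  nlinarith [sq_nonneg ‖gradx f u y - gradx f v y‖]

theorem hasGradientAt_fhat (hf : IsLSmooth l f) (p : ℝ) (y : EuclideanSpace ℝ (Fin d2))
    (z u : EuclideanSpace ℝ (Fin d1)) :
    HasGradientAt (fun u' => fhat f p u' y z) (gradx f u y + p • (u - z)) u := by
  have hfy : Differentiable ℝ (fun u' => f u' y) :=
    hf.1.comp (differentiable_id.prodMk (differentiable_const y))
  have hsq : HasFDerivAt (fun u' => ‖u' - z‖ ^ 2) (2 • innerSL ℝ (u - z)) u := by
    simpa using ((hasFDerivAt_id u).sub_const z).norm_sq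
  rw [hasGradientAt_iff_hasFDerivAt]
  refine ((hfy u).hasGradientAt.hasFDerivAt.add (hsq.const_mul (p / 2))).congr_fderiv ?_
  ext v
  simp only [add_apply, smul_apply, InnerProductSpace.toDual_apply_apply, innerSL_apply_apply,
    inner_add_left, real_inner_smul_left, smul_eq_mul, gradx]
  ring

end IsLSmooth

/-- with `p = 2l` and the `μ`-PL condition in `y`,
`‖x*(y,z) − x*(z)‖² ≤ (2/(lμ))‖∇_y f(x,y)‖² + (2/(lμ))‖∇_x f̂(x,y,z)‖²` for all `x, z, y`.
Here the supremum `sup_y f(x,y)` is attained at `ymax x`, so that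
`Φ(x,z) = sup_y f̂(x,y,z) = f̂(x, ymax x, z)`, whose minimizer in `x` is `x*(z)`. -/
theorem statement5 {d1 d2 : ℕ} (l μ : ℝ) (hl : 0 < l) (hμ : 0 < μ)
    (f : EuclideanSpace ℝ (Fin d1) → EuclideanSpace ℝ (Fin d2) → ℝ)
    (hf : IsLSmooth l f)
    -- `μ`-PL condition in `y`: the supremum in `y` is finite, attained at `ymax x`, and
    -- `‖∇_y f(x,y)‖² ≥ 2μ(sup_{y'} f(x,y') − f(x,y))`
    (ymax : EuclideanSpace ℝ (Fin d1) → EuclideanSpace ℝ (Fin d2))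
    (hymax : ∀ x y, f x y ≤ f x (ymax x))
    (hPL : ∀ x y, 2 * μ * (f x (ymax x) - f x y) ≤ ‖grady f x y‖ ^ 2)
    -- `x*(y, z)`: the (unique) minimizer of `x ↦ f̂(x, y, z)` with `p = 2l`
    (xstar : EuclideanSpace ℝ (Fin d2) → EuclideanSpace ℝ (Fin d1) → EuclideanSpace ℝ (Fin d1))
    (hxstar : ∀ y z x, fhat f (2 * l) (xstar y z) y z ≤ fhat f (2 * l) x y z)
    -- `x*(z)`: the (unique) minimizer of `x ↦ Φ(x,z) = sup_y f̂(x,y,z) = f̂(x, ymax x, z)`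
    (xstarz : EuclideanSpace ℝ (Fin d1) → EuclideanSpace ℝ (Fin d1))
    (hxstarz : ∀ z x, fhat f (2 * l) (xstarz z) (ymax (xstarz z)) z
        ≤ fhat f (2 * l) x (ymax x) z) :
    ∀ (x z : EuclideanSpace ℝ (Fin d1)) (y : EuclideanSpace ℝ (Fin d2)),
      ‖xstar y z - xstarz z‖ ^ 2
        ≤ 2 / (l * μ) * ‖grady f x y‖ ^ 2
          + 2 / (l * μ) * ‖gradx f x y + (2 * l) • (x - z)‖ ^ 2 := by
  intro x z y
  set a := xstar y z
  set b := xstarz z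
  set G := fun u => gradx f u y + (2 * l) • (u - z)
  have hgrad := hf.hasGradientAt_fhat (2 * l) y z
  have hGa : G a = 0 :=
    IsLocalMin.hasGradientAt_eq_zero (Filter.Eventually.of_forall (hxstar y z)) (hgrad a)
  have hG : ∀ u, l * ‖u - a‖ ^ 2 ≤ ⟪G u, u - a⟫ := fun u => by
    have h : (2 * l - l) * ‖u - a‖ ^ 2 ≤ ⟪G u - G a, u - a⟫ :=
      sub_mul_norm_sq_le_inner_of_lipschitz (hf.norm_gradx_sub_le hl.le · · y) (2 * l) z u a
    rwa [hGa, sub_zero, two_mul, add_sub_cancel_right] at h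
  have hgrowth := add_half_mul_norm_sq_le_of_inner_gradient hgrad hG b
  have hgap : l / 2 * ‖a - b‖ ^ 2 ≤ f a (ymax a) - f a y := by
    have hΦ := hxstarz z a
    have hmax := hymax b y
    simp only [fhat] at hΦ hgrowth
    rw [norm_sub_rev]
    linarith
  have hdist : l * ‖a - x‖ ≤ ‖G x‖ := by
    rw [norm_sub_rev]
    exact mul_norm_le_norm_of_mul_norm_sq_le_inner (hG x)
  have hgrady : ‖grady f a y‖ ≤ ‖grady f x y‖ + ‖G x‖ :=
    calc ‖grady f a y‖ ≤ ‖grady f x y‖ + ‖grady f a y - grady f x y‖ := norm_le_insert' _ _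
      _ ≤ ‖grady f x y‖ + ‖G x‖ := by linarith [hf.norm_grady_sub_le hl.le a x y]
  have hkey : l * μ * ‖a - b‖ ^ 2 ≤ 2 * ‖grady f x y‖ ^ 2 + 2 * ‖G x‖ ^ 2 := by
    nlinarith [hPL a y, norm_nonneg (grady f a y), sq_nonneg (‖grady f x y‖ - ‖G x‖)]
  rw [← mul_add, div_mul_eq_mul_div, le_div_iff₀ (by positivity)]
  linarith
end

section
/- Let p = 2l and 0 < η ≤ 1/(1000l). For y ∈ Y and z ∈ ℝ^{d1}, define y⁺(z) := P_Y(y + η∇_y f(x*(y,z), y)). Then f̂(x*(y,z), y*(x*(y,z)), z) − f̂(x*(y,z), y⁺(z), z) ≤ (2(1 + ηl)/(μη²))·‖y − y⁺(z)‖². -/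
open Set Metric
open scoped RealInnerProductSpace

section Projection

variable {E : Type*} [NormedAddCommGroup E] [InnerProductSpace ℝ E]

theorem real_inner_sub_le_zero_of_forall_norm_sub_le {K : Set E} (hK : Convex ℝ K) {v q w : E}
    (hq : q ∈ K) (hmin : ∀ w ∈ K, ‖v - q‖ ≤ ‖v - w‖) (hw : w ∈ K) : ⟪v - q, w - q⟫ ≤ 0 := by
  have : Nonempty K := ⟨⟨q, hq⟩⟩
  refine (norm_eq_iInf_iff_real_inner_le_zero hK hq).mp (le_antisymm ?_ ?_) w hw
  · exact le_ciInf fun w ↦ hmin w w.2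
  · exact ciInf_le ⟨0, by rintro _ ⟨w, rfl⟩; exact norm_nonneg _⟩ (⟨q, hq⟩ : K)

end Projection

section Gradient

variable {E : Type*} [NormedAddCommGroup E] [InnerProductSpace ℝ E] [CompleteSpace E]
  {s : Set E} {φ : E → ℝ} {G u w : E}

theorem ConcaveOn.le_add_inner_of_hasGradientAt (hφ : ConcaveOn ℝ s φ)
    (hG : HasGradientAt φ G u) (hu : u ∈ s) (hw : w ∈ s) :
    φ w ≤ φ u + ⟪G, w - u⟫ := by
  set ℓ : ℝ →ᵃ[ℝ] E := AffineMap.lineMap u w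
  have hderiv : HasDerivAt (φ ∘ ℓ) ⟪G, w - u⟫ 0 := by
    simpa [ℓ] using hG.hasFDerivAt.comp_hasDerivAt_of_eq 0 AffineMap.hasDerivAt_lineMap (by simp)
  have hslope := (hφ.comp_affineMap ℓ).slope_le_of_hasDerivAt (by simpa [ℓ]) (by simpa [ℓ])
    zero_lt_one hderiv
  simp only [slope_def_field, Function.comp_apply, AffineMap.lineMap_apply_one,
    AffineMap.lineMap_apply_zero, sub_zero, div_one, ℓ] at hslope
  linarith

theorem StrongConcaveOn.le_add_inner_sub_of_hasGradientAt {μ : ℝ} (hφ : StrongConcaveOn s μ φ)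
    (hG : HasGradientAt φ G u) (hu : u ∈ s) (hw : w ∈ s) :
    φ w ≤ φ u + ⟪G, w - u⟫ - μ / 2 * ‖w - u‖ ^ 2 := by
  have hG' : HasGradientAt (fun v ↦ φ v + μ / 2 * ‖v‖ ^ 2) (G + μ • u) u := by
    rw [hasGradientAt_iff_hasFDerivAt]
    refine (hG.hasFDerivAt.add
      ((hasStrictFDerivAt_norm_sq u).hasFDerivAt.const_mul (μ / 2))).congr_fderiv ?_
    ext v
    simp only [add_apply, InnerProductSpace.toDual_apply_apply, smul_apply, coe_innerSL_apply,
      nsmul_eq_mul, Nat.cast_ofNat, smul_eq_mul, map_add, map_smul]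
    ring
  have hfirst := (strongConcaveOn_iff_convex.mp hφ).le_add_inner_of_hasGradientAt hG' hu hw
  simp only [inner_add_left, real_inner_smul_left, norm_sub_sq_real, inner_sub_right,
    real_inner_self_eq_norm_sq] at hfirst ⊢
  rw [real_inner_comm u w]
  linarith

variable {Y : Set E} {L η : ℝ} {y q : E}

theorem inner_gradient_le_of_projected_gradient_step (hη : 0 < η) (hY : Convex ℝ Y)
    (hL : ∀ a b, ‖gradient φ a - gradient φ b‖ ≤ L * ‖a - b‖) (hq : q ∈ Y)
    (hqmin : ∀ w ∈ Y, ‖y + η • gradient φ y - q‖ ≤ ‖y + η • gradient φ y - w‖) (hw : w ∈ Y) :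
    ⟪gradient φ q, w - q⟫ ≤ (1 / η + L) * (‖y - q‖ * ‖w - q‖) := by
  have hvi := real_inner_sub_le_zero_of_forall_norm_sub_le hY hq hqmin hw
  have hstep : η * ⟪gradient φ y, w - q⟫ ≤ ‖y - q‖ * ‖w - q‖ := by
    have hsplit : η • gradient φ y = (y + η • gradient φ y - q) + (q - y) := by abel
    have hcs := real_inner_le_norm (q - y) (w - q)
    rw [norm_sub_rev] at hcs
    rw [← real_inner_smul_left, hsplit, inner_add_left]
    linarith
  have hlip : ⟪gradient φ q - gradient φ y, w - q⟫ ≤ L * ‖y - q‖ * ‖w - q‖ := by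
    calc _ ≤ ‖gradient φ q - gradient φ y‖ * ‖w - q‖ := real_inner_le_norm _ _
      _ ≤ L * ‖y - q‖ * ‖w - q‖ := by
        rw [norm_sub_rev y q]; gcongr; exact hL q y
  have hg : ⟪gradient φ y, w - q⟫ ≤ 1 / η * (‖y - q‖ * ‖w - q‖) := by
    rw [one_div_mul_eq_div, le_div_iff₀ hη]; linarith
  rw [inner_sub_left] at hlip
  linarith

theorem StrongConcaveOn.sub_le_of_projected_gradient_step {μ : ℝ} (hμ : 0 < μ) (hη : 0 < η)
    (hY : Convex ℝ Y) (hφ : StrongConcaveOn Y μ φ) (hd : Differentiable ℝ φ)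
    (hL : ∀ a b, ‖gradient φ a - gradient φ b‖ ≤ L * ‖a - b‖) (hq : q ∈ Y)
    (hqmin : ∀ w ∈ Y, ‖y + η • gradient φ y - q‖ ≤ ‖y + η • gradient φ y - w‖) (hw : w ∈ Y) :
    φ w - φ q ≤ (1 / η + L) ^ 2 / (2 * μ) * ‖y - q‖ ^ 2 := by
  have hconc := hφ.le_add_inner_sub_of_hasGradientAt (hd q).hasGradientAt hq hw
  have hinner := inner_gradient_le_of_projected_gradient_step hη hY hL hq hqmin hw
  set a := 1 / η + L
  set r := ‖y - q‖
  set d := ‖w - q‖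
  have hamgm : a * (r * d) - μ / 2 * d ^ 2 ≤ a ^ 2 / (2 * μ) * r ^ 2 := by
    rw [div_mul_eq_mul_div (a ^ 2), le_div_iff₀ (by positivity)]
    nlinarith [sq_nonneg (a * r - μ * d)]
  linarith

end Gradient

theorem IsLSmooth.differentiable_right {d1 d2 : ℕ} {l : ℝ}
    {f : EuclideanSpace ℝ (Fin d1) → EuclideanSpace ℝ (Fin d2) → ℝ} (hf : IsLSmooth l f)
    (x : EuclideanSpace ℝ (Fin d1)) : Differentiable ℝ (f x) :=
  hf.1.comp ((differentiable_const x).prodMk differentiable_id)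

theorem IsLSmooth.norm_grady_sub_le_s7 {d1 d2 : ℕ} {l : ℝ}
    {f : EuclideanSpace ℝ (Fin d1) → EuclideanSpace ℝ (Fin d2) → ℝ} (hf : IsLSmooth l f)
    (hl : 0 ≤ l) (x : EuclideanSpace ℝ (Fin d1)) (y₁ y₂ : EuclideanSpace ℝ (Fin d2)) :
    ‖grady f x y₁ - grady f x y₂‖ ≤ l * ‖y₁ - y₂‖ := by
  have h := hf.2 x x y₁ y₂
  rw [sub_self, norm_zero] at h
  refine (pow_le_pow_iff_left₀ (norm_nonneg _) (by positivity) two_ne_zero).mp ?_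
  nlinarith [sq_nonneg ‖gradx f x y₁ - gradx f x y₂‖]

theorem fhat_sub_fhat {d1 d2 : ℕ}
    (f : EuclideanSpace ℝ (Fin d1) → EuclideanSpace ℝ (Fin d2) → ℝ) (p : ℝ)
    (x : EuclideanSpace ℝ (Fin d1)) (y₁ y₂ : EuclideanSpace ℝ (Fin d2))
    (z : EuclideanSpace ℝ (Fin d1)) :
    fhat f p x y₁ z - fhat f p x y₂ z = f x y₁ - f x y₂ := by
  simp only [fhat]; ring

theorem statement7_general {d1 d2 : ℕ} (l μ η : ℝ) (hl : 0 < l) (hμ : 0 < μ)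
    (f : EuclideanSpace ℝ (Fin d1) → EuclideanSpace ℝ (Fin d2) → ℝ)
    (hf : IsLSmooth l f)
    (Y : Set (EuclideanSpace ℝ (Fin d2)))
    (hYconv : Convex ℝ Y)
    (projY : EuclideanSpace ℝ (Fin d2) → EuclideanSpace ℝ (Fin d2))
    (hprojY_mem : ∀ v, projY v ∈ Y)
    (hprojY : ∀ v, ∀ w ∈ Y, ‖v - projY v‖ ≤ ‖v - w‖)
    (hconc : ∀ x, StrongConcaveOn Y μ (f x))
    (ystar : EuclideanSpace ℝ (Fin d1) → EuclideanSpace ℝ (Fin d2))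
    (hystar_mem : ∀ x, ystar x ∈ Y)
    -- `x*(y, z)`: the (unique) minimizer of `x ↦ f̂(x, y, z)` with `p = 2l`
    (xstar : EuclideanSpace ℝ (Fin d2) → EuclideanSpace ℝ (Fin d1) → EuclideanSpace ℝ (Fin d1))
    (hη : 0 < η) (hη' : η ≤ 1 / (1000 * l))
    (y : EuclideanSpace ℝ (Fin d2)) (z : EuclideanSpace ℝ (Fin d1)) :
    fhat f (2 * l) (xstar y z) (ystar (xstar y z)) z
        - fhat f (2 * l) (xstar y z) (projY (y + η • grady f (xstar y z) y)) z
      ≤ 2 * (1 + η * l) / (μ * η ^ 2)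
          * ‖y - projY (y + η • grady f (xstar y z) y)‖ ^ 2 := by
  set x := xstar y z
  have hbound := (hconc x).sub_le_of_projected_gradient_step (y := y) hμ hη hYconv
    (hf.differentiable_right x) (hf.norm_grady_sub_le_s7 hl.le x) (hprojY_mem _) (hprojY _)
    (hystar_mem x)
  have hηl : η * l ≤ 1 / 1000 := by
    rw [le_div_iff₀ (by positivity)] at hη'
    linarith
  have hconst : (1 / η + l) ^ 2 / (2 * μ) ≤ 2 * (1 + η * l) / (μ * η ^ 2) := by
    rw [div_le_div_iff₀ (by positivity) (by positivity)]
    field_simp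
    nlinarith [mul_pos hη hl]
  rw [fhat_sub_fhat]
  exact hbound.trans (mul_le_mul_of_nonneg_right hconst (sq_nonneg _))

/-- with `p = 2l`, `y⁺(z) = P_Y(y + η∇_y f(x*(y,z), y))` and `y*(x)` the
unique maximizer of the `μ`-strongly concave `f(x,·)` over `Y`,
`f̂(x*(y,z), y*(x*(y,z)), z) − f̂(x*(y,z), y⁺(z), z) ≤ (2(1 + ηl)/(μη²))‖y − y⁺(z)‖²`. -/
theorem statement7 {d1 d2 : ℕ} (l μ η : ℝ) (hl : 0 < l) (hμ : 0 < μ)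
    (f : EuclideanSpace ℝ (Fin d1) → EuclideanSpace ℝ (Fin d2) → ℝ)
    (hf : IsLSmooth l f)
    (Y : Set (EuclideanSpace ℝ (Fin d2))) (hYne : Y.Nonempty) (hYcl : IsClosed Y)
    (hYconv : Convex ℝ Y)
    (projY : EuclideanSpace ℝ (Fin d2) → EuclideanSpace ℝ (Fin d2))
    (hprojY_mem : ∀ v, projY v ∈ Y)
    (hprojY : ∀ v, ∀ w ∈ Y, ‖v - projY v‖ ≤ ‖v - w‖)
    (hconc : ∀ x, StrongConcaveOn Y μ (f x))
    (ystar : EuclideanSpace ℝ (Fin d1) → EuclideanSpace ℝ (Fin d2))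
    (hystar_mem : ∀ x, ystar x ∈ Y)
    (hystar : ∀ x, ∀ y ∈ Y, f x y ≤ f x (ystar x))
    -- `x*(y, z)`: the (unique) minimizer of `x ↦ f̂(x, y, z)` with `p = 2l`
    (xstar : EuclideanSpace ℝ (Fin d2) → EuclideanSpace ℝ (Fin d1) → EuclideanSpace ℝ (Fin d1))
    (hxstar : ∀ y z x, fhat f (2 * l) (xstar y z) y z ≤ fhat f (2 * l) x y z)
    (hη : 0 < η) (hη' : η ≤ 1 / (1000 * l))
    (y : EuclideanSpace ℝ (Fin d2)) (hy : y ∈ Y) (z : EuclideanSpace ℝ (Fin d1)) :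
    fhat f (2 * l) (xstar y z) (ystar (xstar y z)) z
        - fhat f (2 * l) (xstar y z) (projY (y + η • grady f (xstar y z) y)) z
      ≤ 2 * (1 + η * l) / (μ * η ^ 2)
          * ‖y - projY (y + η • grady f (xstar y z) y)‖ ^ 2 :=
  statement7_general l μ η hl hμ f hf Y hYconv projY hprojY_mem hprojY hconc ystar hystar_mem xstar
    hη hη' y z
end
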